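/- Suppose E, x*, δ, M, μ, L satisfy Assumption (A) with index k (1 ≤ k ≤ d), and let κ = L/μ, r̂ = 2μ/M, β = 2/(L+μ). Let (x^{(n)})_{n≥0} ⊂ ℝ^d be a sequence such that for each n there exist orthonormal eigenvectors v₁^{(n)}, …, v_k^{(n)} of ∇²E(x^{(n)}) corresponding to its k smallest eigenvalues with x^{(n+1)} = x^{(n)} − β·(I − 2·Σ_{i=1}^k v_i^{(n)}·(v_i^{(n)})ᵀ)·∇E(x^{(n)}). If r₀ = ‖x^{(0)} − x*‖₂ < min{δ, r̂}, then for all n ≥ 0, ‖x^{(n)} − x*‖₂ ≤ (1 − 2/(κ+3))^n · (r̂·r₀)/(r̂ − r₀); in particular x^{(n)} converges to x* as n → ∞. -/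

import Mathlib

open Matrix Finset Filter

noncomputable section

abbrev EVec (d : ℕ) := EuclideanSpace ℝ (Fin d)

/-- The operator (spectral) norm of a real matrix, i.e. the norm of the induced
linear map between Euclidean spaces. -/
noncomputable def specNorm {m n : Type*} [Fintype m] [Fintype n] [DecidableEq n]
    (A : Matrix m n ℝ) : ℝ :=
  ‖LinearMap.toContinuousLinearMap (Matrix.toEuclideanLin A)‖

/-- Matrix-vector multiplication on Euclidean space. -/
noncomputable def mulVecE {d : ℕ} (A : Matrix (Fin d) (Fin d) ℝ) (x : EVec d) : EVec d :=
  Matrix.toEuclideanLin A x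

/-- Outer product `v · wᵀ` of two vectors. -/
def outer {d : ℕ} (v w : EVec d) : Matrix (Fin d) (Fin d) ℝ :=
  Matrix.of fun i j => v i * w j

/-- Assumption (A) with index `k` for the energy `E` with Hessian `hess`, saddle point
`xstar`, radius `δ`, Lipschitz constant `M` and eigenvalue bounds `0 < μ < L`:
`E` is twice continuously differentiable, `hess` is the (symmetric) Hessian of `E`,
`∇E(x*) = 0`, the Hessian is `M`-Lipschitz on `U(x*, δ)`, and for every
`x ∈ U(x*, δ)` the eigenvalues `λ₁ ≤ … ≤ λ_d` of `∇²E(x)` satisfy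
`λ₁ ≤ … ≤ λ_k < 0 < λ_{k+1} ≤ … ≤ λ_d` and `μ ≤ |λᵢ| ≤ L`. -/
def AssumptionA {d : ℕ} (k : ℕ) (E : EVec d → ℝ)
    (hess : EVec d → Matrix (Fin d) (Fin d) ℝ)
    (xstar : EVec d) (δ M μ L : ℝ) : Prop :=
  ContDiff ℝ 2 E ∧
  (∀ y, HasFDerivAt (gradient E)
    (LinearMap.toContinuousLinearMap (Matrix.toEuclideanLin (hess y))) y) ∧
  (∀ y, (hess y).IsSymm) ∧
  gradient E xstar = 0 ∧
  0 < δ ∧ 0 < M ∧ 0 < μ ∧ μ < L ∧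
  (∀ x y : EVec d, ‖x - xstar‖ < δ → ‖y - xstar‖ < δ →
    specNorm (hess x - hess y) ≤ M * ‖x - y‖) ∧
  (∀ x : EVec d, ‖x - xstar‖ < δ →
    ∃ (u : Fin d → EVec d) (lam : Fin d → ℝ),
      (∀ i j, (inner ℝ (u i) (u j) : ℝ) = if i = j then 1 else 0) ∧
      (∀ i, mulVecE (hess x) (u i) = lam i • u i) ∧
      Monotone lam ∧
      (∀ i : Fin d, (i : ℕ) < k → lam i < 0) ∧
      (∀ i : Fin d, k ≤ (i : ℕ) → 0 < lam i) ∧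
      (∀ i, μ ≤ |lam i| ∧ |lam i| ≤ L))

lemma mulVecE_outer {d : ℕ} (v w z : EVec d) :
    mulVecE (outer v w) z = (inner ℝ w z : ℝ) • v := by
  ext i
  simp [mulVecE, Matrix.toEuclideanLin_apply, Matrix.mulVec, dotProduct, outer,
    PiLp.inner_apply, Finset.mul_sum, Finset.sum_mul, mul_comm, mul_left_comm, mul_assoc]

lemma mulVecE_symm {d : ℕ} (A : Matrix (Fin d) (Fin d) ℝ) (h : A.IsSymm) (a b : EVec d) :
    (inner ℝ (mulVecE A a) b : ℝ) = inner ℝ a (mulVecE A b) := by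
  have hH : A.IsHermitian := h
  exact (Matrix.isHermitian_iff_isSymmetric.mp hH) a b

-- reflection matrix applied
lemma mulVecE_refl {d k : ℕ} (v : Fin k → EVec d) (z : EVec d) :
    mulVecE (1 - (2:ℝ) • ∑ i, outer (v i) (v i)) z
      = z - (2:ℝ) • ∑ i, (inner ℝ (v i) z : ℝ) • v i := by
  have h1 : mulVecE (d := d) 1 z = z := by
    simp [mulVecE, Matrix.toEuclideanLin_apply, Matrix.one_mulVec]
  have h2 : mulVecE ((2:ℝ) • ∑ i, outer (v i) (v i)) z
      = (2:ℝ) • ∑ i, (inner ℝ (v i) z : ℝ) • v i := by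
    simp only [mulVecE, _root_.map_smul, map_sum, LinearMap.smul_apply, LinearMap.coe_sum,
      Finset.sum_apply]
    congr 1
    refine Finset.sum_congr rfl fun i _ => ?_
    exact mulVecE_outer (v i) (v i) z
  have h3 : mulVecE (1 - (2:ℝ) • ∑ i, outer (v i) (v i)) z
      = mulVecE (d := d) 1 z - mulVecE ((2:ℝ) • ∑ i, outer (v i) (v i)) z := by
    simp only [mulVecE, map_sub, LinearMap.sub_apply]
  rw [h3, h1, h2]

lemma norm_sum_smul_eq {d : ℕ} (b : OrthonormalBasis (Fin d) ℝ (EVec d)) (f : Fin d → ℝ) :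
    ‖∑ j, f j • b j‖ = Real.sqrt (∑ j, (f j)^2) := by
  rw [b.sum_repr_symm, LinearIsometryEquiv.norm_map, EuclideanSpace.norm_eq]
  simp [sq_abs]

lemma norm_sum_smul_le {d : ℕ} (b : OrthonormalBasis (Fin d) ℝ (EVec d)) (e c : Fin d → ℝ)
    (ρ : ℝ) (hρ : 0 ≤ ρ) (he : ∀ j, |e j| ≤ ρ) :
    ‖∑ j, (e j * c j) • b j‖ ≤ ρ * ‖∑ j, c j • b j‖ := by
  rw [norm_sum_smul_eq, norm_sum_smul_eq]
  rw [show ρ * Real.sqrt (∑ j, (c j)^2) = Real.sqrt (ρ^2 * ∑ j, (c j)^2) by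
    rw [Real.sqrt_mul (sq_nonneg ρ), Real.sqrt_sq hρ]]
  apply Real.sqrt_le_sqrt
  rw [Finset.mul_sum]
  apply Finset.sum_le_sum
  intro j _
  have : (e j)^2 ≤ ρ^2 := by
    have := he j
    nlinarith [abs_nonneg (e j), sq_abs (e j)]
  nlinarith [sq_nonneg (c j)]

lemma onb_exists {d : ℕ} (hd : 0 < d) (u : Fin d → EVec d)
    (hu : ∀ i j, (inner ℝ (u i) (u j) : ℝ) = if i = j then 1 else 0) :
    ∃ b : OrthonormalBasis (Fin d) ℝ (EVec d), ⇑b = u := by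
  have hon : Orthonormal ℝ u := by
    rw [orthonormal_iff_ite]; intro i j; simpa using hu i j
  have hsp : ⊤ ≤ Submodule.span ℝ (Set.range u) := by
    have : Nonempty (Fin d) := ⟨⟨0, hd⟩⟩
    rw [hon.linearIndependent.span_eq_top_of_card_eq_finrank (by simp)]
  exact ⟨OrthonormalBasis.mk hon hsp, OrthonormalBasis.coe_mk hon hsp⟩

/-- Projection identity: the sum of outer projections of an orthonormal family acts as
identity on the span. -/
lemma proj_eq_self_of_mem_span {d k : ℕ} (v : Fin k → EVec d)
    (hvon : ∀ i j, (inner ℝ (v i) (v j) : ℝ) = if i = j then 1 else 0)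
    (z : EVec d) (hz : z ∈ Submodule.span ℝ (Set.range v)) :
    ∑ i, (inner ℝ (v i) z : ℝ) • v i = z := by
  induction hz using Submodule.span_induction with
  | mem w hw =>
    obtain ⟨m, rfl⟩ := hw
    have : ∀ i, (inner ℝ (v i) (v m) : ℝ) • v i = (if i = m then (1:ℝ) else 0) • v i := by
      intro i; rw [hvon]
    simp only [this, ite_smul, one_smul, zero_smul]
    simp
  | zero => simp
  | add w₁ w₂ _ _ h₁ h₂ =>
    simp only [inner_add_right, add_smul, Finset.sum_add_distrib, h₁, h₂]
  | smul a w _ h =>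
    simp only [real_inner_smul_right, mul_smul, ← Finset.smul_sum, h]

lemma grad_taylor {d : ℕ} (E : EVec d → ℝ) (hess : EVec d → Matrix (Fin d) (Fin d) ℝ)
    (xstar : EVec d) (δ M : ℝ)
    (hgrad : ∀ y, HasFDerivAt (gradient E)
      (LinearMap.toContinuousLinearMap (Matrix.toEuclideanLin (hess y))) y)
    (hgrad0 : gradient E xstar = 0)
    (hLip : ∀ x y : EVec d, ‖x - xstar‖ < δ → ‖y - xstar‖ < δ →
      specNorm (hess x - hess y) ≤ M * ‖x - y‖)
    (x : EVec d) (hx : ‖x - xstar‖ < δ) :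
    ‖gradient E x - mulVecE (hess x) (x - xstar)‖ ≤ M / 2 * ‖x - xstar‖^2 := by
  set w : EVec d := x - xstar with hw
  set T : EVec d → (EVec d →L[ℝ] EVec d) :=
    fun y => LinearMap.toContinuousLinearMap (Matrix.toEuclideanLin (hess y)) with hT
  set φ : ℝ → EVec d := fun t => gradient E (xstar + t • w) - t • (T x w) with hφ
  have hpath : ∀ t : ℝ, HasDerivAt (fun s : ℝ => xstar + s • w) w t := by
    intro t
    simpa using ((hasDerivAt_id t).smul_const w).const_add xstar
  have hφ' : ∀ t : ℝ, HasDerivAt φ (T (xstar + t • w) w - T x w) t := by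
    intro t
    have h1 : HasDerivAt (fun s : ℝ => gradient E (xstar + s • w)) (T (xstar + t • w) w) t := by
      exact (hgrad (xstar + t • w)).comp_hasDerivAt t (hpath t)
    have h2 := (hasDerivAt_id t).smul_const (T x w)
    simp only [id, one_smul] at h2
    exact h1.sub h2
  have hdist : ∀ t : ℝ, ‖(xstar + t • w) - xstar‖ = |t| * ‖w‖ := by
    intro t; simp [norm_smul]
  have hbound : ∀ t ∈ Set.Ico (0:ℝ) 1, ‖T (xstar + t • w) w - T x w‖ ≤ (M * ‖w‖^2) * (1 - t) := by
    intro t ht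
    have hmem : ‖(xstar + t • w) - xstar‖ < δ := by
      rw [hdist]
      calc |t| * ‖w‖ ≤ 1 * ‖w‖ := by
            apply mul_le_mul_of_nonneg_right _ (norm_nonneg w)
            rw [abs_of_nonneg ht.1]; exact ht.2.le
        _ = ‖w‖ := one_mul _
        _ < δ := hx
    have hdiff : T (xstar + t • w) w - T x w = (T (xstar + t • w) - T x) w := by
      simp
    rw [hdiff]
    calc ‖(T (xstar + t • w) - T x) w‖ ≤ ‖T (xstar + t • w) - T x‖ * ‖w‖ :=
          (T (xstar + t • w) - T x).le_opNorm w
      _ ≤ (M * ‖(xstar + t • w) - x‖) * ‖w‖ := by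
          apply mul_le_mul_of_nonneg_right _ (norm_nonneg w)
          have : T (xstar + t • w) - T x =
              LinearMap.toContinuousLinearMap (Matrix.toEuclideanLin
                (hess (xstar + t • w) - hess x)) := by
            simp [hT, map_sub]
          rw [this]
          exact hLip _ _ hmem hx
      _ = (M * ‖w‖^2) * (1 - t) := by
          have : (xstar + t • w) - x = (t - 1) • w := by
            rw [hw]; module
          rw [this, norm_smul]
          have : ‖t - (1:ℝ)‖ = 1 - t := by
            rw [Real.norm_eq_abs, abs_of_nonpos (by linarith [ht.2.le])]; ring
          rw [this]; ring
  -- boundary function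
  set C : ℝ := M * ‖w‖^2 with hC
  have hB : ∀ t : ℝ, HasDerivAt (fun s : ℝ => C * (s - s^2/2)) (C * (1 - t)) t := by
    intro t
    have h1 : HasDerivAt (fun s : ℝ => s - s^2/2) (1 - t) t := by
      have := ((hasDerivAt_id t).sub ((hasDerivAt_pow 2 t).div_const 2))
      convert this using 1
      · rfl
      · rfl
      · rfl
      · norm_num
    simpa [mul_comm] using h1.const_mul C
  have key := image_norm_le_of_norm_deriv_right_le_deriv_boundary
    (f := φ) (f' := fun t => T (xstar + t • w) w - T x w) (a := 0) (b := 1)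
    (fun t _ => (hφ' t).continuousAt.continuousWithinAt)
    (fun t ht => (hφ' t).hasDerivWithinAt)
    (by simp [hφ, hgrad0])
    hB hbound
  have k1 := key (Set.right_mem_Icc.mpr zero_le_one)
  have hxw : xstar + w = x := by rw [hw]; module
  have : φ 1 = gradient E x - T x w := by simp [hφ, hxw]
  rw [this] at k1
  have : T x w = mulVecE (hess x) w := rfl
  rw [this] at k1
  calc ‖gradient E x - mulVecE (hess x) w‖ ≤ C * (1 - 1^2/2) := k1
    _ = M / 2 * ‖w‖^2 := by ring

lemma step_bound {d k : ℕ} (hk : 1 ≤ k) (hkd : k ≤ d)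
    (E : EVec d → ℝ) (hess : EVec d → Matrix (Fin d) (Fin d) ℝ)
    (xstar : EVec d) (δ M μ L : ℝ)
    (hA : AssumptionA k E hess xstar δ M μ L)
    (y : EVec d) (hy : ‖y - xstar‖ < δ)
    (v : Fin k → EVec d) (lamv : Fin k → ℝ)
    (hvon : ∀ i j, (inner ℝ (v i) (v j) : ℝ) = if i = j then 1 else 0)
    (hveig : ∀ i, mulVecE (hess y) (v i) = lamv i • v i)
    (hvneg : ∀ i, lamv i < 0) :
    ‖(y - (2/(L+μ)) • mulVecE (1 - (2:ℝ) • ∑ i, outer (v i) (v i)) (gradient E y)) - xstar‖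
      ≤ (L-μ)/(L+μ) * ‖y - xstar‖ + M/(L+μ) * ‖y - xstar‖^2 := by
  obtain ⟨hC, hgrad, hsymm, hg0, hδ, hM, hμ, hμL, hLip, heig⟩ := hA
  obtain ⟨u, lam, huon, hueig, hmono, hneg, hpos, hbnd⟩ := heig y hy
  have hd : 0 < d := lt_of_lt_of_le hk hkd
  have hLμ : 0 < L + μ := by linarith
  set β : ℝ := 2/(L+μ) with hβ
  have hβpos : 0 < β := by positivity
  obtain ⟨b, hb⟩ := onb_exists hd u huon
  -- inner ℝ products of v i with u j vanish for j ≥ k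
  have hvu0 : ∀ (i : Fin k) (j : Fin d), k ≤ (j:ℕ) → (inner ℝ (v i) (u j) : ℝ) = 0 := by
    intro i j hj
    have h1 : lamv i * (inner ℝ (v i) (u j) : ℝ) = lam j * (inner ℝ (v i) (u j) : ℝ) := by
      calc lamv i * (inner ℝ (v i) (u j) : ℝ) = (inner ℝ (lamv i • v i) (u j) : ℝ) := by
            rw [real_inner_smul_left]
        _ = (inner ℝ (mulVecE (hess y) (v i)) (u j) : ℝ) := by rw [hveig]
        _ = (inner ℝ (v i) (mulVecE (hess y) (u j)) : ℝ) := mulVecE_symm _ (hsymm y) _ _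
        _ = (inner ℝ (v i) (lam j • u j) : ℝ) := by rw [hueig]
        _ = lam j * (inner ℝ (v i) (u j) : ℝ) := by rw [real_inner_smul_right]
    have hne : lamv i ≠ lam j := ne_of_lt ((hvneg i).trans (hpos j hj))
    have := sub_eq_zero.mpr h1
    rw [← sub_mul] at this
    rcases mul_eq_zero.mp this with h | h
    · exact absurd (sub_eq_zero.mp h) hne
    · exact h
  -- u j for j < k lies in the span of v
  set Vs := Submodule.span ℝ (Set.range v) with hVs
  have huVs : ∀ j : Fin d, (j:ℕ) < k → u j ∈ Vs := by
    set w' : Fin k → EVec d := fun i => u (Fin.castLE hkd i) with hw'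
    have hw'on : ∀ i j, (inner ℝ (w' i) (w' j) : ℝ) = if i = j then 1 else 0 := by
      intro i j
      rw [hw']
      simp only [huon]
      congr 1
      simp [Fin.castLE, Fin.ext_iff]
    set Ws := Submodule.span ℝ (Set.range w') with hWs
    have hVW : Vs ≤ Ws := by
      rw [hVs, Submodule.span_le]
      rintro _ ⟨i, rfl⟩
      have hvi : v i = ∑ j, (inner ℝ (u j) (v i) : ℝ) • u j := by
        conv_lhs => rw [← b.sum_repr' (v i)]
        simp [hb]
      rw [hvi]
      apply Submodule.sum_mem
      intro j _
      by_cases hj : (j:ℕ) < k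
      · apply Submodule.smul_mem
        apply Submodule.subset_span
        exact ⟨⟨(j:ℕ), hj⟩, by simp [hw', Fin.castLE, Fin.ext_iff]⟩
      · rw [real_inner_comm, hvu0 i j (le_of_not_gt hj)]
        simp
    have honv : Orthonormal ℝ v := by
      rw [orthonormal_iff_ite]; intro i j; simpa using hvon i j
    have honw : Orthonormal ℝ w' := by
      rw [orthonormal_iff_ite]; intro i j; simpa using hw'on i j
    have hfV : Module.finrank ℝ Vs = k := by
      rw [hVs, finrank_span_eq_card honv.linearIndependent]
      simp
    have hfW : Module.finrank ℝ Ws = k := by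
      rw [hWs, finrank_span_eq_card honw.linearIndependent]
      simp
    have : Vs = Ws := Submodule.eq_of_le_of_finrank_le hVW (by rw [hfV, hfW])
    intro j hj
    rw [this, hWs]
    apply Submodule.subset_span
    exact ⟨⟨(j:ℕ), hj⟩, by simp [hw', Fin.castLE, Fin.ext_iff]⟩
  -- action of the reflection on the basis
  set ε : Fin d → ℝ := fun j => if (j:ℕ) < k then (-1:ℝ) else 1 with hε
  set Pm : Matrix (Fin d) (Fin d) ℝ := 1 - (2:ℝ) • ∑ i, outer (v i) (v i) with hPm
  have hPu : ∀ j : Fin d, mulVecE Pm (u j) = ε j • u j := by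
    intro j
    rw [hPm, mulVecE_refl]
    by_cases hj : (j:ℕ) < k
    · rw [proj_eq_self_of_mem_span v hvon (u j) (huVs j hj)]
      rw [hε]; simp only [hj, if_true]
      module
    · have : ∀ i : Fin k, (inner ℝ (v i) (u j) : ℝ) • v i = 0 := by
        intro i; rw [hvu0 i j (le_of_not_gt hj)]; simp
      simp only [this, Finset.sum_const_zero, smul_zero, sub_zero]
      rw [hε]; simp only [hj, if_false, one_smul]
  -- linear action on sums
  have hPsum : ∀ a : Fin d → ℝ,
      mulVecE Pm (∑ j, a j • u j) = ∑ j, (ε j * a j) • u j := by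
    intro a
    simp only [mulVecE, map_sum, _root_.map_smul]
    refine Finset.sum_congr rfl fun j _ => ?_
    have : (Matrix.toEuclideanLin Pm) (u j) = ε j • u j := hPu j
    rw [this, smul_smul, mul_comm]
  have hHsum : ∀ a : Fin d → ℝ,
      mulVecE (hess y) (∑ j, a j • u j) = ∑ j, (lam j * a j) • u j := by
    intro a
    simp only [mulVecE, map_sum, _root_.map_smul]
    refine Finset.sum_congr rfl fun j _ => ?_
    have : (Matrix.toEuclideanLin (hess y)) (u j) = lam j • u j := hueig j
    rw [this, smul_smul, mul_comm]
  -- decompose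
  set wv : EVec d := y - xstar with hwv
  set c : Fin d → ℝ := fun j => b.repr wv j with hc
  have hwvsum : wv = ∑ j, c j • u j := by
    conv_lhs => rw [← b.sum_repr wv]
    simp [hb, hc]
  set err : EVec d := gradient E y - mulVecE (hess y) wv with herrdef
  have herr : ‖err‖ ≤ M / 2 * ‖wv‖^2 :=
    grad_taylor E hess xstar δ M hgrad hg0 hLip y hy
  have hgradsplit : gradient E y = mulVecE (hess y) wv + err := by
    rw [herrdef]; module
  have hPlin : ∀ (a₁ a₂ : EVec d), mulVecE Pm (a₁ + a₂) = mulVecE Pm a₁ + mulVecE Pm a₂ := by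
    intro a₁ a₂; simp [mulVecE, map_add]
  -- the two pieces
  set A1 : EVec d := wv - β • mulVecE Pm (mulVecE (hess y) wv) with hA1
  set A2 : EVec d := mulVecE Pm err with hA2
  have hsplit : (y - β • mulVecE Pm (gradient E y)) - xstar = A1 - β • A2 := by
    rw [hA1, hA2, hgradsplit, hPlin, hwv]
    module
  -- bound A1
  have hA1bound : ‖A1‖ ≤ (L-μ)/(L+μ) * ‖wv‖ := by
    have h1 : mulVecE Pm (mulVecE (hess y) wv) = ∑ j, (ε j * (lam j * c j)) • u j := by
      rw [hwvsum, hHsum, hPsum]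
    have h2 : A1 = ∑ j, ((1 - β * |lam j|) * c j) • u j := by
      rw [hA1, h1]
      conv_lhs => rw [hwvsum]
      rw [Finset.smul_sum, ← Finset.sum_sub_distrib]
      refine Finset.sum_congr rfl fun j _ => ?_
      rw [smul_smul, ← sub_smul]
      congr 1
      have habs : ε j * lam j = |lam j| := by
        rw [hε]
        by_cases hj : (j:ℕ) < k
        · simp only [hj, if_true]
          rw [abs_of_neg (hneg j hj)]; ring
        · simp only [hj, if_false]
          rw [abs_of_pos (hpos j (le_of_not_gt hj))]; ring
      rw [← habs]; ring
    rw [h2]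
    have hρ0 : (0:ℝ) ≤ (L-μ)/(L+μ) := by
      apply div_nonneg <;> linarith
    have hecoef : ∀ j, abs (1 - β * |lam j|) ≤ (L-μ)/(L+μ) := by
      intro j
      obtain ⟨hl1, hl2⟩ := hbnd j
      have h3 : 1 - β * |lam j| = (L + μ - 2 * |lam j|)/(L+μ) := by
        rw [hβ]; field_simp
      rw [h3, abs_div, abs_of_pos hLμ]
      gcongr
      rw [abs_le]
      constructor <;> linarith
    calc ‖∑ j, ((1 - β * |lam j|) * c j) • u j‖
        = ‖∑ j, ((1 - β * |lam j|) * c j) • b j‖ := by rw [hb]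
      _ ≤ (L-μ)/(L+μ) * ‖∑ j, c j • b j‖ :=
          norm_sum_smul_le b (fun j => 1 - β * |lam j|) c _ hρ0 hecoef
      _ = (L-μ)/(L+μ) * ‖wv‖ := by rw [hb, ← hwvsum]
  -- bound A2
  have hA2bound : ‖A2‖ ≤ ‖err‖ := by
    set f : Fin d → ℝ := fun j => b.repr err j with hf
    have herrsum : err = ∑ j, f j • u j := by
      conv_lhs => rw [← b.sum_repr err]
      simp [hb, hf]
    have h1 : A2 = ∑ j, (ε j * f j) • u j := by rw [hA2, herrsum, hPsum]
    have hεle : ∀ j, |ε j| ≤ (1:ℝ) := by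
      intro j; rw [hε]; by_cases hj : (j:ℕ) < k <;> simp [hj]
    calc ‖A2‖ = ‖∑ j, (ε j * f j) • b j‖ := by rw [h1, hb]
      _ ≤ 1 * ‖∑ j, f j • b j‖ := norm_sum_smul_le b ε f 1 zero_le_one hεle
      _ = ‖err‖ := by rw [one_mul, hb, ← herrsum]
  -- combine
  rw [hsplit]
  calc ‖A1 - β • A2‖ ≤ ‖A1‖ + ‖β • A2‖ := norm_sub_le _ _
    _ = ‖A1‖ + β * ‖A2‖ := by rw [norm_smul, Real.norm_eq_abs, abs_of_pos hβpos]
    _ ≤ (L-μ)/(L+μ) * ‖wv‖ + β * (M/2 * ‖wv‖^2) := by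
        apply add_le_add hA1bound
        apply mul_le_mul_of_nonneg_left _ hβpos.le
        exact hA2bound.trans herr
    _ = (L-μ)/(L+μ) * ‖y - xstar‖ + M/(L+μ) * ‖y - xstar‖^2 := by
        rw [hβ, ← hwv]; field_simp

lemma arith_step (μ L M r r' : ℝ) (hμ : 0 < μ) (hμL : μ < L) (hM : 0 < M)
    (hr : 0 ≤ r) (hr' : 0 ≤ r') (hrlt : r < 2*μ/M)
    (hstep : r' ≤ (L-μ)/(L+μ)*r + M/(L+μ)*r^2) :
    r' ≤ r ∧
    r'/(2*μ/M - r') ≤ ((L+μ)/(L+3*μ)) * (r/(2*μ/M - r)) := by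
  have hLμ : 0 < L + μ := by linarith
  have hL3μ : 0 < L + 3*μ := by linarith
  have hMr : M * r < 2*μ := by
    rw [lt_div_iff₀ hM] at hrlt; linarith [hrlt]
  have hstep' : (L+μ) * r' ≤ (L-μ)*r + M*r^2 := by
    have h : (L-μ)/(L+μ)*r + M/(L+μ)*r^2 = ((L-μ)*r + M*r^2)/(L+μ) := by ring
    rw [h, le_div_iff₀ hLμ] at hstep
    linarith
  have hgle : (L-μ)*r + M*r^2 ≤ (L+μ)*r := by nlinarith
  have hr'r : r' ≤ r := by nlinarith
  refine ⟨hr'r, ?_⟩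
  have hrhr : 0 < 2*μ/M - r := by linarith
  have hrhr' : 0 < 2*μ/M - r' := by linarith
  have hMrh : M * (2*μ/M) = 2*μ := by field_simp
  -- cleared-denominator key inequality
  have key : r' * (2*μ - M*r) * (L+3*μ) ≤ (L+μ) * r * (2*μ - M*r') := by
    set G : ℝ := (L-μ)*r + M*r^2 with hG
    have h1 : M*(L+μ)*r*((L+μ)*r') ≤ M*(L+μ)*r*G :=
      mul_le_mul_of_nonneg_left hstep' (by positivity)
    have h2 : (2*μ - M*r)*(L+3*μ)*((L+μ)*r') ≤ (2*μ - M*r)*(L+3*μ)*G := by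
      apply mul_le_mul_of_nonneg_left hstep'
      apply mul_nonneg _ hL3μ.le
      linarith
    have h3 : 2*μ*(L+μ)^2*r - M*(L+μ)*r*G - G*(2*μ - M*r)*(L+3*μ)
        = 2*μ*r*(2*μ - M*r)^2 := by rw [hG]; ring
    nlinarith [sq_nonneg (2*μ - M*r), mul_nonneg (mul_nonneg hμ.le hr) (sq_nonneg (2*μ - M*r))]
  have hMr' : M * r' < 2*μ := by nlinarith
  have e1 : 2*μ/M - r = (2*μ - M*r)/M := by field_simp
  have e2 : 2*μ/M - r' = (2*μ - M*r')/M := by field_simp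
  rw [e1, e2, div_div_eq_mul_div, div_div_eq_mul_div, div_mul_div_comm,
    div_le_div_iff₀ (by linarith) (mul_pos hL3μ (by linarith))]
  nlinarith [mul_le_mul_of_nonneg_left key hM.le]

/-- Theorem 5.2 (convergence, exact eigenvectors, index k): under Assumption (A) with
index `k`, `κ = L/μ`, `r̂ = 2μ/M`, `β = 2/(L+μ)`, if in each step the iteration uses
orthonormal eigenvectors of `∇²E(x⁽ⁿ⁾)` corresponding to its `k` smallest eigenvalues
and `r₀ = ‖x⁽⁰⁾ - x*‖₂ < min {δ, r̂}`, then
`‖x⁽ⁿ⁾ - x*‖₂ ≤ (1 - 2/(κ+3))ⁿ r̂ r₀ / (r̂ - r₀)` for all `n`, and `x⁽ⁿ⁾ → x*`. -/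
theorem indexk_exact_convergence {d k : ℕ} (hk : 1 ≤ k) (hkd : k ≤ d)
    (E : EVec d → ℝ)
    (hess : EVec d → Matrix (Fin d) (Fin d) ℝ)
    (xstar : EVec d) (δ M μ L : ℝ)
    (hA : AssumptionA k E hess xstar δ M μ L)
    (κ rhat β : ℝ) (hκ : κ = L / μ) (hrhat : rhat = 2 * μ / M) (hβ : β = 2 / (L + μ))
    (x : ℕ → EVec d)
    (hstep : ∀ n : ℕ, ∃ (v : Fin k → EVec d) (lam : Fin k → ℝ),
      (∀ i j, (inner ℝ (v i) (v j) : ℝ) = if i = j then 1 else 0) ∧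
      Monotone lam ∧
      (∀ i, mulVecE (hess (x n)) (v i) = lam i • v i) ∧
      (∀ i, lam i < 0) ∧
      x (n + 1) = x n - β • mulVecE
        (1 - (2 : ℝ) • ∑ i, outer (v i) (v i)) (gradient E (x n)))
    (h0 : ‖x 0 - xstar‖ < min δ rhat) :
    (∀ n : ℕ, ‖x n - xstar‖ ≤
      (1 - 2 / (κ + 3)) ^ n * (rhat * ‖x 0 - xstar‖ / (rhat - ‖x 0 - xstar‖))) ∧
    Tendsto x atTop (nhds xstar) := by
  obtain ⟨hC, hgrad, hsymm, hg0, hδ, hM, hμ, hμL, hLip, heig⟩ := hA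
  have hA' : AssumptionA k E hess xstar δ M μ L :=
    ⟨hC, hgrad, hsymm, hg0, hδ, hM, hμ, hμL, hLip, heig⟩
  set r : ℕ → ℝ := fun n => ‖x n - xstar‖ with hr
  have hr0 : ∀ n, 0 ≤ r n := fun n => norm_nonneg _
  set q : ℝ := (L + μ) / (L + 3*μ) with hq
  have hLμ : 0 < L + μ := by linarith
  have hL3μ : 0 < L + 3*μ := by linarith
  have hq0 : 0 ≤ q := by positivity
  have hq1 : q < 1 := by
    rw [hq, div_lt_one hL3μ]; linarith
  have hqeq : 1 - 2 / (κ + 3) = q := by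
    rw [hκ, hq]
    have hLpos : 0 < L := lt_trans hμ hμL
    have : L / μ + 3 ≠ 0 := by positivity
    field_simp
    ring
  have h0δ : r 0 < δ := lt_of_lt_of_le h0 (min_le_left _ _)
  have h0rh : r 0 < rhat := lt_of_lt_of_le h0 (min_le_right _ _)
  have hrhpos : 0 < rhat := lt_of_le_of_lt (hr0 0) h0rh
  -- the induction
  have main : ∀ n, r n ≤ r 0 ∧ r n / (rhat - r n) ≤ q^n * (r 0 / (rhat - r 0)) := by
    intro n
    induction n with
    | zero => exact ⟨le_refl _, by simp⟩
    | succ n ih =>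
      obtain ⟨ih1, ih2⟩ := ih
      have hnδ : ‖x n - xstar‖ < δ := lt_of_le_of_lt ih1 h0δ
      have hnrh : r n < rhat := lt_of_le_of_lt ih1 h0rh
      obtain ⟨v, lamv, hvon, hvmono, hveig, hvneg, hxeq⟩ := hstep n
      have hstepb : r (n+1) ≤ (L-μ)/(L+μ) * r n + M/(L+μ) * (r n)^2 := by
        have := step_bound hk hkd E hess xstar δ M μ L hA' (x n) hnδ v lamv hvon hveig hvneg
        rw [hr]
        simp only []
        rw [hxeq, hβ]
        exact this
      have harith := arith_step μ L M (r n) (r (n+1)) hμ hμL hM (hr0 n) (hr0 (n+1))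
        (by rw [← hrhat] at *; linarith) (by rw [← hrhat] at *; exact hstepb)
      rw [← hrhat] at harith
      obtain ⟨ha1, ha2⟩ := harith
      refine ⟨ha1.trans ih1, ?_⟩
      calc r (n+1) / (rhat - r (n+1)) ≤ q * (r n / (rhat - r n)) := by rw [hq]; exact ha2
        _ ≤ q * (q^n * (r 0 / (rhat - r 0))) := mul_le_mul_of_nonneg_left ih2 hq0
        _ = q^(n+1) * (r 0 / (rhat - r 0)) := by ring
  -- conclude the bound
  have hbound : ∀ n, r n ≤ (1 - 2/(κ+3))^n * (rhat * r 0 / (rhat - r 0)) := by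
    intro n
    obtain ⟨h1, h2⟩ := main n
    have hden : 0 < rhat - r n := by linarith [lt_of_le_of_lt h1 h0rh]
    have hstep1 : r n ≤ rhat * (r n / (rhat - r n)) := by
      rw [mul_div_assoc'] at *
      rw [le_div_iff₀ hden]
      nlinarith [hr0 n, hrhpos]
    calc r n ≤ rhat * (r n / (rhat - r n)) := hstep1
      _ ≤ rhat * (q^n * (r 0 / (rhat - r 0))) := mul_le_mul_of_nonneg_left h2 hrhpos.le
      _ = q^n * (rhat * r 0 / (rhat - r 0)) := by ring
      _ = (1 - 2/(κ+3))^n * (rhat * r 0 / (rhat - r 0)) := by rw [hqeq]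
  refine ⟨hbound, ?_⟩
  rw [tendsto_iff_norm_sub_tendsto_zero]
  have hq0' : 0 ≤ 1 - 2/(κ+3) := by rw [hqeq]; exact hq0
  have hq1' : 1 - 2/(κ+3) < 1 := by rw [hqeq]; exact hq1
  have htend : Tendsto (fun n : ℕ => (1 - 2/(κ+3))^n * (rhat * r 0 / (rhat - r 0)))
      atTop (nhds 0) := by
    have := (tendsto_pow_atTop_nhds_zero_of_lt_one hq0' hq1').mul_const
      (rhat * r 0 / (rhat - r 0))
    simpa using this
  exact squeeze_zero (fun n => norm_nonneg _) hbound htend
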